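/- arXiv:1402.4064 — 6 statements merged into one kernel-verified Lean document; each statement's English description precedes it below -/
import Mathlib

section
/- Let α ∈ (0,1] and suppose real positive numbers a, b, c satisfy min(|1 - a/(bc)|, |1 - bc/a|) ≤ 1 - α. Then α·bc ≤ a ≤ (1/α)·bc. -/
theorem stmt4 (α a b c : ℝ) (hα0 : 0 < α) (hα1 : α ≤ 1)
    (ha : 0 < a) (hb : 0 < b) (hc : 0 < c)
    (h : min |1 - a / (b * c)| |1 - b * c / a| ≤ 1 - α) :
    α * (b * c) ≤ a ∧ a ≤ (1 / α) * (b * c) := by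
  have hbc : 0 < b * c := mul_pos hb hc
  have k1 : a / (b * c) * (b * c) = a := div_mul_cancel₀ a hbc.ne'
  have k2 : b * c / a * a = b * c := div_mul_cancel₀ (b * c) ha.ne'
  rcases min_le_iff.mp h with h' | h'
  · obtain ⟨h1, h2⟩ := abs_le.mp h'
    constructor
    · nlinarith
    · rw [div_mul_eq_mul_div, le_div_iff₀ hα0]
      nlinarith [mul_le_mul_of_nonneg_right h1 hbc.le, mul_nonneg (sq_nonneg (1-α)) hbc.le]
  · obtain ⟨h1, h2⟩ := abs_le.mp h'
    constructor
    · nlinarith [mul_le_mul_of_nonneg_right h1 ha.le, mul_nonneg (sq_nonneg (1-α)) ha.le]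
    · rw [div_mul_eq_mul_div, le_div_iff₀ hα0]
      nlinarith
end

section
/- Let A be an n×n real matrix with non-positive off-diagonal entries (a Z-matrix). If there exists a vector x > 0 (entrywise strictly positive) with Ax > 0 (entrywise strictly positive), then A is nonsingular and A⁻¹ has all entries non-negative. -/
lemma stmt8_key (n : ℕ) (A : Matrix (Fin n) (Fin n) ℝ)
    (hZ : ∀ i j, i ≠ j → A i j ≤ 0)
    (x : Fin n → ℝ) (hx : ∀ i, 0 < x i) (hAx : ∀ i, 0 < A.mulVec x i)
    (y : Fin n → ℝ) (hy : ∀ i, 0 ≤ A.mulVec y i) : ∀ i, 0 ≤ y i := by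
  intro i
  by_contra h
  push_neg at h
  obtain ⟨k, -, hk⟩ := Finset.exists_min_image Finset.univ (fun j => y j / x j)
    ⟨i, Finset.mem_univ i⟩
  set t := y k / x k with ht_def
  have ht : t < 0 :=
    lt_of_le_of_lt (hk i (Finset.mem_univ i)) (div_neg_of_neg_of_pos h (hx i))
  have hyj : ∀ j, t * x j ≤ y j := by
    intro j
    have h1 : t ≤ y j / x j := hk j (Finset.mem_univ j)
    have h2 := mul_le_mul_of_nonneg_right h1 (hx j).le
    rwa [div_mul_cancel₀ _ (hx j).ne'] at h2
  have hyk : y k = t * x k := by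
    rw [ht_def, div_mul_cancel₀ _ (hx k).ne']
  have hle : A.mulVec y k ≤ t * A.mulVec x k := by
    simp only [Matrix.mulVec, dotProduct]
    rw [Finset.mul_sum]
    apply Finset.sum_le_sum
    intro j _
    rcases eq_or_ne j k with rfl | hjk
    · rw [hyk]; ring_nf; exact le_refl _
    · have h1 : A k j ≤ 0 := hZ k j (Ne.symm hjk)
      have h2 := mul_le_mul_of_nonpos_left (hyj j) h1
      nlinarith
  have : A.mulVec y k < 0 := lt_of_le_of_lt hle (mul_neg_of_neg_of_pos ht (hAx k))
  exact absurd (hy k) (not_le.2 this)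

theorem stmt8 (n : ℕ) (A : Matrix (Fin n) (Fin n) ℝ)
    (hZ : ∀ i j, i ≠ j → A i j ≤ 0)
    (x : Fin n → ℝ) (hx : ∀ i, 0 < x i) (hAx : ∀ i, 0 < A.mulVec x i) :
    IsUnit A.det ∧ ∀ i j, 0 ≤ A⁻¹ i j := by
  have hdet : A.det ≠ 0 := by
    intro hdet0
    obtain ⟨v, hv, hAv⟩ := (Matrix.exists_mulVec_eq_zero_iff).2 hdet0
    have h1 : ∀ i, 0 ≤ v i := stmt8_key n A hZ x hx hAx v (fun i => by rw [hAv]; exact le_refl 0)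
    have h2 : ∀ i, 0 ≤ -v i := by
      have : A.mulVec (-v) = 0 := by rw [Matrix.mulVec_neg, hAv, neg_zero]
      exact stmt8_key n A hZ x hx hAx (-v) (fun i => by rw [this]; exact le_refl 0)
    exact hv (funext fun i => show v i = 0 from le_antisymm (by linarith [h2 i]) (h1 i))
  have hunit : IsUnit A.det := isUnit_iff_ne_zero.2 hdet
  refine ⟨hunit, fun i j => ?_⟩
  have hmul : A * A⁻¹ = 1 := Matrix.mul_nonsing_inv A hunit
  have hcol : ∀ i, 0 ≤ A.mulVec (fun k => A⁻¹ k j) i := by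
    intro i
    have : A.mulVec (fun k => A⁻¹ k j) i = (A * A⁻¹) i j := by
      simp [Matrix.mulVec, Matrix.mul_apply, dotProduct]
    rw [this, hmul]
    by_cases hij : i = j <;> simp [Matrix.one_apply, hij]
  exact stmt8_key n A hZ x hx hAx _ hcol i
end

section
/- Let n ≥ 3, 1 ≤ k ≤ n-1, and let M be an n×n positive reciprocal matrix. Define the k×k matrix A by a_ii = 1 and a_ij = -m_ij/(n-1) for i ≠ j (i, j ≤ k). If M is consistent, then A is a nonsingular M-matrix: A⁻¹ exists and A⁻¹ ≥ 0 entrywise. -/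
/-!
Consistency makes `M` rank one: `M i j = M i z * M z j` for any fixed `z`, and `M i i = 1`.
Hence `A = c • 1 - a • u vᵀ` with `c = n/(n-1)`, `a = 1/(n-1)`, `u i = M i z`, `v j = M z j`
and `v ⬝ᵥ u = k`. By Sherman–Morrison its inverse is `c⁻¹ • 1 + b • u vᵀ`, where
`b = a / (c (c - a k)) ≥ 0` because `k < n`, and the entries of `u vᵀ` are entries of `M`,
hence positive.
-/

open Matrix

namespace Matrix

variable {ι K : Type*} [Fintype ι] [DecidableEq ι]

theorem smul_one_sub_smul_vecMulVec_mul_eq_one [Field K] {c a : K} {u v : ι → K}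
    (hc : c ≠ 0) (hd : c - a * (v ⬝ᵥ u) ≠ 0) :
    (c • 1 - a • vecMulVec u v) *
      (c⁻¹ • 1 + (a / (c * (c - a * (v ⬝ᵥ u)))) • vecMulVec u v) = 1 := by
  have hsq : vecMulVec u v * vecMulVec u v = (v ⬝ᵥ u) • vecMulVec u v := by
    rw [vecMulVec_mul_vecMulVec, vecMulVec_smul]
  simp only [sub_mul, mul_add, smul_mul_smul_comm, hsq, Matrix.one_mul, Matrix.mul_one, smul_smul]
  have hcoef : c * (a / (c * (c - a * (v ⬝ᵥ u)))) - a * (a / (c * (c - a * (v ⬝ᵥ u)))) * (v ⬝ᵥ u)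
      = a * c⁻¹ := by
    field_simp
  rw [mul_inv_cancel₀ hc, one_smul, ← sub_smul, hcoef, sub_add_cancel]

theorem isUnit_det_and_inv_nonneg_smul_one_sub_smul_vecMulVec [Field K] [LinearOrder K]
    [IsStrictOrderedRing K] {c a : K} {u v : ι → K} (hc : 0 < c) (ha : 0 ≤ a)
    (hd : a * (v ⬝ᵥ u) < c) (huv : ∀ i j, 0 ≤ u i * v j) :
    IsUnit (c • 1 - a • vecMulVec u v).det ∧ ∀ i j, 0 ≤ (c • 1 - a • vecMulVec u v)⁻¹ i j := by
  have hright := smul_one_sub_smul_vecMulVec_mul_eq_one hc.ne' (sub_pos.2 hd).ne'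
  refine ⟨isUnit_det_of_right_inverse hright, fun i j => ?_⟩
  rw [inv_eq_right_inv hright]
  have hb : 0 ≤ a / (c * (c - a * (v ⬝ᵥ u))) := div_nonneg ha (mul_pos hc (sub_pos.2 hd)).le
  simp only [add_apply, smul_apply, one_apply, vecMulVec_apply, smul_eq_mul]
  have huv_ij := huv i j
  split_ifs <;> positivity

end Matrix

section Consistent

variable {ι : Type*} {M : Matrix ι ι ℝ}

theorem diag_eq_one_of_consistent (hpos : ∀ i j, 0 < M i j)
    (hcons : ∀ i j l, M i j * M j l * M l i = 1) (i : ι) : M i i = 1 := by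
  have hcube : M i i ^ 3 = 1 := by rw [← hcons i i i]; ring
  exact (pow_eq_one_iff_of_nonneg (hpos i i).le (by norm_num)).1 hcube

theorem eq_mul_of_consistent (hpos : ∀ i j, 0 < M i j)
    (hcons : ∀ i j l, M i j * M j l * M l i = 1) (i j z : ι) : M i j = M i z * M z j := by
  have hij : M i j * M j i = 1 := by
    simpa [diag_eq_one_of_consistent hpos hcons i] using hcons i j i
  have hizj : M i z * M z j * M j i = 1 := hcons i z j
  exact mul_right_cancel₀ (hpos j i).ne' (hij.trans hizj.symm)

end Consistent

theorem stmt11 (n k : ℕ) (hn : 3 ≤ n) (hkn : k ≤ n - 1)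
    (M : Matrix (Fin n) (Fin n) ℝ)
    (hpos : ∀ i j, 0 < M i j)
    (hcons : ∀ i j l, M i j * M j l * M l i = 1)
    (A : Matrix (Fin k) (Fin k) ℝ)
    (hA : ∀ i j : Fin k, A i j =
      if i = j then 1
      else -(M (Fin.castLE (by omega) i) (Fin.castLE (by omega) j)) / ((n : ℝ) - 1)) :
    IsUnit A.det ∧ ∀ i j, 0 ≤ A⁻¹ i j := by
  have hkn' : (k : ℝ) < n := by exact_mod_cast (show k < n by omega)
  have hn1 : (0 : ℝ) < n - 1 := by
    have : (3 : ℝ) ≤ n := by exact_mod_cast hn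
    linarith
  set e : Fin k → Fin n := Fin.castLE (by omega)
  set z : Fin n := ⟨0, by omega⟩
  set u : Fin k → ℝ := fun i => M (e i) z
  set v : Fin k → ℝ := fun j => M z (e j)
  have hdot : v ⬝ᵥ u = k := by
    simp [dotProduct, v, u, ← eq_mul_of_consistent hpos hcons, diag_eq_one_of_consistent hpos hcons]
  have hA_eq : A = ((n : ℝ) / (n - 1)) • 1 - (1 / ((n : ℝ) - 1)) • vecMulVec u v := by
    ext i j
    rw [hA]
    simp only [Matrix.sub_apply, Matrix.smul_apply, one_apply, vecMulVec_apply, smul_eq_mul, u, v,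
      ← eq_mul_of_consistent hpos hcons]
    split_ifs with hij
    · rw [hij, diag_eq_one_of_consistent hpos hcons]
      field_simp
    · field_simp
      ring
  rw [hA_eq]
  refine isUnit_det_and_inv_nonneg_smul_one_sub_smul_vecMulVec (div_pos (by linarith) hn1)
    (one_div_nonneg.2 hn1.le) ?_ fun i j => ?_
  · rw [hdot, one_div_mul_eq_div, div_lt_div_iff_of_pos_right hn1]
    exact hkn'
  · simp only [u, v, ← eq_mul_of_consistent hpos hcons]
    exact (hpos _ _).le
end

section
/- Let n ≥ 3, r = n - k with 0 < r ≤ n - 2, and α ∈ (0,1]. Suppose real numbers t_ij for i,j ∈ {1,…,k} satisfy α ≤ t_ij ≤ 1/α. If (n-1)α² - α - (n-r-2) > 0 and (n-1)α - (n-r-1) > 0, then for every i ≤ k-1: (n-1)t_ii - (Σ_{j ≤ k-1, j ≠ i} t_ij) - 1 > 0, and also (n-1) - Σ_{j=1}^{k-1} t_kj > 0. -/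
open Finset

/- Every off-diagonal entry is at most `1/α`, so after multiplying by `α > 0` the row
inequalities become exactly `f(α) > 0` and `g(α) > 0` once the number of summands is
expressed through `k = n - r`. -/

theorem sum_le_card_mul_of_le {ι : Type*} (s : Finset ι) (x : ι → ℝ) {b : ℝ}
    (hx : ∀ j ∈ s, x j ≤ b) : ∑ j ∈ s, x j ≤ s.card * b := by
  simpa only [nsmul_eq_mul] using sum_le_card_nsmul s x b hx

theorem mul_sub_sum_sub_one_pos {ι : Type*} (s : Finset ι) (x : ι → ℝ) {c d α : ℝ}
    (hα : 0 < α) (hc : 0 ≤ c) (hd : α ≤ d) (hx : ∀ j ∈ s, x j ≤ 1 / α)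
    (hf : c * α ^ 2 - α - s.card > 0) : c * d - ∑ j ∈ s, x j - 1 > 0 := by
  have hsum := sum_le_card_mul_of_le s x hx
  have hcard : (s.card : ℝ) * (1 / α) < c * α - 1 := by
    rw [mul_one_div, div_lt_iff₀ hα]
    linarith
  linarith [mul_le_mul_of_nonneg_left hd hc]

theorem sub_sum_pos {ι : Type*} (s : Finset ι) (x : ι → ℝ) {c α : ℝ}
    (hα : 0 < α) (hx : ∀ j ∈ s, x j ≤ 1 / α) (hg : c * α - s.card > 0) :
    c - ∑ j ∈ s, x j > 0 := by
  have hsum := sum_le_card_mul_of_le s x hx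
  have hcard : (s.card : ℝ) * (1 / α) < c := by
    rw [mul_one_div, div_lt_iff₀ hα]
    linarith
  linarith

theorem stmt12_general (n k r : ℕ) (hr : r = n - k) (hr0 : 0 < r) (hrn : r ≤ n - 2)
    (α : ℝ) (hα0 : 0 < α)
    (t : ℕ → ℕ → ℝ)
    (ht : ∀ i j, 1 ≤ i → i ≤ k → 1 ≤ j → j ≤ k → α ≤ t i j ∧ t i j ≤ 1 / α)
    (hf : ((n : ℝ) - 1) * α ^ 2 - α - ((n : ℝ) - r - 2) > 0)
    (hg : ((n : ℝ) - 1) * α - ((n : ℝ) - r - 1) > 0) :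
    (∀ i, 1 ≤ i → i ≤ k - 1 →
      ((n : ℝ) - 1) * t i i - (∑ j ∈ (Finset.Icc 1 (k - 1)).erase i, t i j) - 1 > 0) ∧
    ((n : ℝ) - 1) - (∑ j ∈ Finset.Icc 1 (k - 1), t k j) > 0 := by
  have hn : (1 : ℝ) ≤ n := by exact_mod_cast (show 1 ≤ n by omega)
  have hrow : ∀ i, 1 ≤ i → i ≤ k → ∀ j ∈ Icc 1 (k - 1), t i j ≤ 1 / α := fun i hi hik j hj ↦
    (ht i j hi hik (mem_Icc.1 hj).1 (by grind)).2
  refine ⟨fun i hi hik ↦ ?_, ?_⟩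
  · have hmem : i ∈ Icc 1 (k - 1) := mem_Icc.2 ⟨hi, hik⟩
    have hcard : (((Icc 1 (k - 1)).erase i).card : ℝ) = n - r - 2 := by
      have : ((Icc 1 (k - 1)).erase i).card + r + 2 = n := by
        rw [card_erase_of_mem hmem, Nat.card_Icc]; omega
      rw [← this]; push_cast; ring
    refine mul_sub_sum_sub_one_pos _ _ hα0 (by linarith) (ht i i hi (by omega) hi (by omega)).1
      (fun j hj ↦ hrow i hi (by omega) j (mem_of_mem_erase hj)) (hcard ▸ hf)
  · have hcard : ((Icc 1 (k - 1)).card : ℝ) = n - r - 1 := by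
      have : (Icc 1 (k - 1)).card + r + 1 = n := by rw [Nat.card_Icc]; omega
      rw [← this]; push_cast; ring
    exact sub_sum_pos _ _ hα0 (hrow k (by omega) le_rfl) (hcard ▸ hg)

theorem stmt12 (n k r : ℕ) (hn : 3 ≤ n) (hr : r = n - k) (hr0 : 0 < r) (hrn : r ≤ n - 2)
    (α : ℝ) (hα0 : 0 < α) (hα1 : α ≤ 1)
    (t : ℕ → ℕ → ℝ)
    (ht : ∀ i j, 1 ≤ i → i ≤ k → 1 ≤ j → j ≤ k → α ≤ t i j ∧ t i j ≤ 1 / α)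
    (hf : ((n : ℝ) - 1) * α ^ 2 - α - ((n : ℝ) - r - 2) > 0)
    (hg : ((n : ℝ) - 1) * α - ((n : ℝ) - r - 1) > 0) :
    (∀ i, 1 ≤ i → i ≤ k - 1 →
      ((n : ℝ) - 1) * t i i - (∑ j ∈ (Finset.Icc 1 (k - 1)).erase i, t i j) - 1 > 0) ∧
    ((n : ℝ) - 1) - (∑ j ∈ Finset.Icc 1 (k - 1), t k j) > 0 :=
  stmt12_general n k r hr hr0 hrn α hα0 t ht hf hg
end

section
/- Let n ≥ 3 and r with 0 < r ≤ n - 2, and let M be an n×n positive reciprocal matrix with Koczkodaj inconsistency index K(M) < 1 - (1 + √(1 + 4(n-1)(n-r-2)))/(2(n-1)). Let k = n - r, define the k×k matrix A by a_ii = 1 and a_ij = -m_ij/(n-1) for i ≠ j, and let b ∈ ℝᵏ be any entrywise strictly positive vector. Then the system Aμ = b has a unique solution μ, and μ is entrywise strictly positive. -/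
noncomputable def kocz {ι : Type*} [Fintype ι] (M : Matrix ι ι ℝ) : ℝ :=
  sSup {x | ∃ i j k : ι, i ≠ j ∧ j ≠ k ∧ i ≠ k ∧
    x = min |1 - M i j / (M i k * M k j)| |1 - M i k * M k j / (M i j)|}

/-!
Write `A = 1 - C` with `C ≥ 0`. Fix a reference alternative `p` (one exists because `r > 0`)
and let `w j = m_{j p} > 0` for the `k = n - r` unknown alternatives `j`. The bound on the
Koczkodaj index gives `m_ij m_jp < m_ip / α` with `α = (1 + √(1 + 4(n-1)(k-2))) / (2(n-1))`,
and `(k - 1) / ((n - 1) α) ≤ 1`, so `C w < w` entrywise. A positive vector with `C w < w`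
makes `1 - C` monotone: at the index minimising `μ_i / w_i`, a nonpositive ratio would force
`((1 - C) μ)_i ≤ 0`. Monotonicity gives injectivity, hence invertibility, and positivity of
the solution.
-/

open scoped Matrix

section Koczkodaj

variable {ι : Type*} [Fintype ι] {M : Matrix ι ι ℝ}

lemma min_abs_le_kocz (hpos : ∀ i j, 0 < M i j) {i j k : ι} (hij : i ≠ j) (hjk : j ≠ k)
    (hik : i ≠ k) :
    min |1 - M i j / (M i k * M k j)| |1 - M i k * M k j / (M i j)| ≤ kocz M := by
  refine le_csSup ⟨1, ?_⟩ ⟨i, j, k, hij, hjk, hik, rfl⟩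
  rintro x ⟨i, j, k, -, -, -, rfl⟩
  have hp := hpos i j
  have hq : 0 < M i k * M k j := mul_pos (hpos i k) (hpos k j)
  rcases le_total (M i j) (M i k * M k j) with h | h
  · refine min_le_of_left_le ?_
    have : M i j / (M i k * M k j) ≤ 1 := (div_le_one hq).mpr h
    rw [abs_of_nonneg (by linarith)]
    linarith [div_pos hp hq]
  · refine min_le_of_right_le ?_
    have : M i k * M k j / M i j ≤ 1 := (div_le_one hp).mpr h
    rw [abs_of_nonneg (by linarith)]
    linarith [div_pos hq hp]

lemma mul_lt_div_of_kocz_lt (hpos : ∀ i j, 0 < M i j) {α : ℝ} (hα : 0 < α)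
    (hK : kocz M < 1 - α) {i j k : ι} (hij : i ≠ j) (hjk : j ≠ k) (hik : i ≠ k) :
    M i k * M k j < M i j / α := by
  have hp := hpos i j
  have hq : 0 < M i k * M k j := mul_pos (hpos i k) (hpos k j)
  rw [lt_div_iff₀ hα]
  rcases min_lt_iff.mp ((min_abs_le_kocz hpos hij hjk hik).trans_lt hK) with h | h
  · have : α < M i j / (M i k * M k j) := by linarith [(abs_lt.mp h).2]
    linarith [(lt_div_iff₀ hq).mp this]
  · have : M i k * M k j / M i j < 2 - α := by linarith [(abs_lt.mp h).1]
    -- `(2 - α) α ≤ 1`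
    nlinarith [(div_lt_iff₀ hp).mp this, sq_nonneg (1 - α)]

end Koczkodaj

lemma two_mul_sub_one_le_one_add_sqrt {N k : ℝ} (hk : 2 ≤ k) (hN : k - 1 ≤ N) :
    2 * (k - 1) ≤ 1 + √(1 + 4 * N * (k - 2)) := by
  have : 2 * k - 3 ≤ √(1 + 4 * N * (k - 2)) :=
    Real.le_sqrt_of_sq_le (by nlinarith)
  linarith

section Monotone

variable {ι : Type*} [Fintype ι] [DecidableEq ι] {C : Matrix ι ι ℝ} {w : ι → ℝ}

lemma mulVec_lt_of_offDiag_lt {c : ℝ} (hw : ∀ i, 0 < w i) (hdiag : ∀ i, C i i = 0)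
    (hoff : ∀ i j, i ≠ j → C i j * w j < c * w i) (hc : ((Fintype.card ι : ℝ) - 1) * c ≤ 1)
    (i : ι) : (C *ᵥ w) i < w i := by
  have hsum : (C *ᵥ w) i = ∑ j ∈ Finset.univ.erase i, C i j * w j := by
    rw [Finset.sum_erase _ (by rw [hdiag, zero_mul])]
    rfl
  rw [hsum]
  have : Nonempty ι := ⟨i⟩
  rcases (Finset.univ.erase i).eq_empty_or_nonempty with h | h
  · rw [h, Finset.sum_empty]
    exact hw i
  calc ∑ j ∈ Finset.univ.erase i, C i j * w j
      < ∑ j ∈ Finset.univ.erase i, c * w i :=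
        Finset.sum_lt_sum_of_nonempty h fun j hj => hoff i j (Finset.ne_of_mem_erase hj).symm
    _ = ((Fintype.card ι : ℝ) - 1) * c * w i := by
        rw [Finset.sum_const, Finset.card_erase_of_mem (Finset.mem_univ i), Finset.card_univ,
          nsmul_eq_mul, Nat.cast_pred Fintype.card_pos, mul_assoc]
    _ ≤ w i := mul_le_of_le_one_left (hw i).le hc

variable (hC : ∀ i j, 0 ≤ C i j) (hw : ∀ i, 0 < w i) (hCw : ∀ i, (C *ᵥ w) i < w i)
include hC hw

lemma exists_sub_mulVec_apply_le [Nonempty ι] (μ : ι → ℝ) :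
    ∃ i t, (∀ j, t * w j ≤ μ j) ∧ (t ≤ 0 → ((1 - C) *ᵥ μ) i ≤ t * (w i - (C *ᵥ w) i)) := by
  obtain ⟨i, -, hi⟩ := Finset.exists_min_image Finset.univ (fun i => μ i / w i)
    Finset.univ_nonempty
  have hμ : ∀ j, μ i / w i * w j ≤ μ j := fun j =>
    (le_div_iff₀ (hw j)).mp (hi j (Finset.mem_univ j))
  refine ⟨i, μ i / w i, hμ, fun ht => ?_⟩
  have hCμ : μ i / w i * (C *ᵥ w) i ≤ (C *ᵥ μ) i := by
    simp only [Matrix.mulVec, dotProduct, Finset.mul_sum]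
    exact Finset.sum_le_sum fun j _ => by nlinarith [hC i j, hμ j]
  rw [Matrix.sub_mulVec, Matrix.one_mulVec, Pi.sub_apply, mul_sub,
    div_mul_cancel₀ _ (hw i).ne']
  linarith

include hCw

lemma nonneg_of_sub_mulVec_nonneg {μ : ι → ℝ} (h : ∀ i, 0 ≤ ((1 - C) *ᵥ μ) i) (j : ι) :
    0 ≤ μ j := by
  have : Nonempty ι := ⟨j⟩
  obtain ⟨i, t, hμ, hle⟩ := exists_sub_mulVec_apply_le hC hw μ
  by_contra! hj
  have ht : t < 0 := by nlinarith [hμ j, hw j]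
  nlinarith [hle ht.le, h i, hCw i]

lemma pos_of_sub_mulVec_pos {μ : ι → ℝ} (h : ∀ i, 0 < ((1 - C) *ᵥ μ) i) (j : ι) :
    0 < μ j := by
  have : Nonempty ι := ⟨j⟩
  obtain ⟨i, t, hμ, hle⟩ := exists_sub_mulVec_apply_le hC hw μ
  have ht : 0 < t := by
    by_contra! ht
    nlinarith [hle ht, h i, hCw i]
  nlinarith [hμ j, hw j]

lemma sub_mulVec_injective : Function.Injective (1 - C).mulVec := by
  intro x y hxy
  have hzero : ∀ i, ((1 - C) *ᵥ (x - y)) i = 0 := by simp [Matrix.mulVec_sub, hxy]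
  have hneg : ∀ i, ((1 - C) *ᵥ (y - x)) i = 0 := by simp [Matrix.mulVec_sub, hxy]
  funext j
  have h₁ := nonneg_of_sub_mulVec_nonneg hC hw hCw (fun i => (hzero i).ge) j
  have h₂ := nonneg_of_sub_mulVec_nonneg hC hw hCw (fun i => (hneg i).ge) j
  simp only [Pi.sub_apply] at h₁ h₂
  linarith

lemma existsUnique_sub_mulVec_eq (b : ι → ℝ) : ∃! μ, (1 - C) *ᵥ μ = b := by
  have hinj := sub_mulVec_injective hC hw hCw
  obtain ⟨μ, hμ⟩ := Matrix.mulVec_surjective_iff_isUnit.mpr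
    (Matrix.mulVec_injective_iff_isUnit.mp hinj) b
  exact ⟨μ, hμ, fun ν hν => hinj (hν.trans hμ.symm)⟩

end Monotone

theorem stmt14_general (n r : ℕ) (hr : 0 < r) (hrn : r ≤ n - 2)
    (M : Matrix (Fin n) (Fin n) ℝ)
    (hpos : ∀ i j, 0 < M i j)
    (hK : kocz M <
      1 - (1 + Real.sqrt (1 + 4 * ((n : ℝ) - 1) * ((n : ℝ) - r - 2))) / (2 * ((n : ℝ) - 1)))
    (A : Matrix (Fin (n - r)) (Fin (n - r)) ℝ)
    (hA : ∀ i j : Fin (n - r), A i j =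
      if i = j then 1
      else -(M (Fin.castLE (Nat.sub_le n r) i) (Fin.castLE (Nat.sub_le n r) j)) / ((n : ℝ) - 1))
    (b : Fin (n - r) → ℝ) (hb : ∀ i, 0 < b i) :
    (∃! μ, A.mulVec μ = b) ∧ ∀ μ, A.mulVec μ = b → ∀ i, 0 < μ i := by
  set e : Fin (n - r) → Fin n := Fin.castLE (Nat.sub_le n r)
  set N : ℝ := (n : ℝ) - 1
  set α := (1 + √(1 + 4 * N * ((n : ℝ) - r - 2))) / (2 * N)
  have hk : ((n - r : ℕ) : ℝ) = (n : ℝ) - r := Nat.cast_sub (by omega)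
  have hk2 : (2 : ℝ) ≤ (n : ℝ) - r := by rw [← hk]; exact_mod_cast (by omega : 2 ≤ n - r)
  have hN : 0 < N := by linarith [show (r : ℝ) ≥ 0 from r.cast_nonneg]
  have hα : 0 < α := by positivity
  have hαk : ((n : ℝ) - r - 1) / (N * α) ≤ 1 := by
    have hNα : N * α = (1 + √(1 + 4 * N * ((n : ℝ) - r - 2))) / 2 := by
      simp only [α]; field_simp
    rw [div_le_one (by positivity), hNα]
    linarith [two_mul_sub_one_le_one_add_sqrt hk2 (by linarith : (n : ℝ) - r - 1 ≤ N)]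
  let C : Matrix (Fin (n - r)) (Fin (n - r)) ℝ := fun i j => if i = j then 0 else M (e i) (e j) / N
  have hAC : A = 1 - C := by
    ext i j
    rw [Matrix.sub_apply, Matrix.one_apply, hA]
    by_cases h : i = j <;> simp [C, h, neg_div]
  have hC : ∀ i j, 0 ≤ C i j := fun i j => by
    by_cases h : i = j
    · simp [C, h]
    · simpa [C, h] using div_nonneg (hpos (e i) (e j)).le hN.le
  let p : Fin n := ⟨n - 1, by omega⟩
  have hep : ∀ i, e i ≠ p := fun i h => by
    have := congrArg Fin.val h; simp [e, p] at this; omega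
  have hCw : ∀ i, (C *ᵥ fun j => M (e j) p) i < M (e i) p := by
    refine mulVec_lt_of_offDiag_lt (c := 1 / (N * α)) (fun i => hpos _ _) (by simp [C])
      (fun i j hij => ?_) (by rw [Fintype.card_fin, hk, mul_one_div]; exact hαk)
    have := mul_lt_div_of_kocz_lt hpos hα hK (hep i) (hep j).symm
      (Fin.castLE_injective _ |>.ne hij)
    simp only [C, if_neg hij]
    calc M (e i) (e j) / N * M (e j) p = M (e i) (e j) * M (e j) p / N := by ring
      _ < M (e i) p / α / N := by gcongr
      _ = 1 / (N * α) * M (e i) p := by rw [div_div, mul_comm α N, one_div_mul_eq_div]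
  rw [hAC]
  exact ⟨existsUnique_sub_mulVec_eq hC (fun i => hpos _ _) hCw b, fun μ hμ =>
    pos_of_sub_mulVec_pos hC (fun i => hpos _ _) hCw (by rw [hμ]; exact hb)⟩

theorem stmt14 (n r : ℕ) (hn : 3 ≤ n) (hr : 0 < r) (hrn : r ≤ n - 2)
    (M : Matrix (Fin n) (Fin n) ℝ)
    (hpos : ∀ i j, 0 < M i j) (hrec : ∀ i j, M j i = 1 / M i j)
    (hK : kocz M <
      1 - (1 + Real.sqrt (1 + 4 * ((n : ℝ) - 1) * ((n : ℝ) - r - 2))) / (2 * ((n : ℝ) - 1)))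
    (A : Matrix (Fin (n - r)) (Fin (n - r)) ℝ)
    (hA : ∀ i j : Fin (n - r), A i j =
      if i = j then 1
      else -(M (Fin.castLE (Nat.sub_le n r) i) (Fin.castLE (Nat.sub_le n r) j)) / ((n : ℝ) - 1))
    (b : Fin (n - r) → ℝ) (hb : ∀ i, 0 < b i) :
    (∃! μ, A.mulVec μ = b) ∧ ∀ μ, A.mulVec μ = b → ∀ i, 0 < μ i :=
  stmt14_general n r hr hrn M hpos hK A hA b hb
end

section
/- For every n ≥ 3 and every r with 0 < r ≤ n - 2, the right-hand side bound 1 - (1 + √(1 + 4(n-1)(n-r-2)))/(2(n-1)) is strictly positive; hence there exists K₀ > 0 such that every positive reciprocal matrix M with Koczkodaj index K(M) < K₀ yields an HRE system Aμ = b with a unique strictly positive solution. -/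
open Finset in
private lemma aux_pos18 {m : ℕ} (c : Matrix (Fin m) (Fin m) ℝ) (b ν : Fin m → ℝ)
    (hc : ∀ i j, i ≠ j → 0 < c i j)
    (hrow : ∀ i, ∑ j ∈ univ.erase i, c i j < 1)
    (hb : ∀ i, 0 < b i)
    (heq : ∀ i, ν i = b i + ∑ j ∈ univ.erase i, c i j * ν j) :
    ∀ i, 0 < ν i := by
  intro i
  obtain ⟨i₀, -, hmin⟩ := Finset.exists_min_image univ ν ⟨i, mem_univ i⟩
  have key : 0 < ν i₀ := by
    by_contra h
    push_neg at h
    have h1 : (∑ j ∈ univ.erase i₀, c i₀ j) * ν i₀ ≤ ∑ j ∈ univ.erase i₀, c i₀ j * ν j := by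
      rw [Finset.sum_mul]
      refine Finset.sum_le_sum fun j hj => ?_
      exact mul_le_mul_of_nonneg_left (hmin j (mem_univ j))
        (hc i₀ j (Finset.ne_of_mem_erase hj).symm).le
    have h2 := heq i₀
    have hs : ∑ j ∈ univ.erase i₀, c i₀ j < 1 := hrow i₀
    nlinarith [hb i₀]
  exact lt_of_lt_of_le key (hmin i (mem_univ i))

open Finset in
private lemma aux_zero18 {m : ℕ} (c : Matrix (Fin m) (Fin m) ℝ) (ν : Fin m → ℝ)
    (hc : ∀ i j, i ≠ j → 0 < c i j)
    (hrow : ∀ i, ∑ j ∈ univ.erase i, c i j < 1)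
    (heq : ∀ i, ν i = ∑ j ∈ univ.erase i, c i j * ν j) :
    ∀ i, ν i = 0 := by
  intro i
  obtain ⟨i₀, -, hmax⟩ := Finset.exists_max_image univ (fun i => |ν i|) ⟨i, mem_univ i⟩
  have key : |ν i₀| = 0 := by
    have h1 : |ν i₀| ≤ ∑ j ∈ univ.erase i₀, c i₀ j * |ν j| := by
      rw [heq i₀]
      refine (Finset.abs_sum_le_sum_abs _ _).trans (Finset.sum_le_sum fun j hj => ?_)
      rw [abs_mul, abs_of_pos (hc i₀ j (Finset.ne_of_mem_erase hj).symm)]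
    have h2 : ∑ j ∈ univ.erase i₀, c i₀ j * |ν j| ≤ (∑ j ∈ univ.erase i₀, c i₀ j) * |ν i₀| := by
      rw [Finset.sum_mul]
      refine Finset.sum_le_sum fun j hj => ?_
      exact mul_le_mul_of_nonneg_left (hmax j (mem_univ j))
        (hc i₀ j (Finset.ne_of_mem_erase hj).symm).le
    have hs : ∑ j ∈ univ.erase i₀, c i₀ j < 1 := hrow i₀
    nlinarith [abs_nonneg (ν i₀)]
  have := hmax i (mem_univ i)
  rw [key] at this
  exact abs_eq_zero.mp (le_antisymm this (abs_nonneg _))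

private lemma qbound18 (K q : ℝ) (hq : 0 < q) (hK : K ≤ 1/3) (hK0 : 0 < K)
    (h : min |1 - q| |1 - 1/q| < K) : 1 - 2*K < q ∧ q < 1 + 2*K := by
  have e : q * (1/q) = 1 := by field_simp
  rcases min_lt_iff.mp h with h' | h'
  · rw [abs_lt] at h'
    constructor <;> nlinarith
  · rw [abs_lt] at h'
    constructor <;> nlinarith

private lemma kocz_ge18 {n : ℕ} (M : Matrix (Fin n) (Fin n) ℝ) (i j k : Fin n)
    (hij : i ≠ j) (hjk : j ≠ k) (hik : i ≠ k) :
    min |1 - M i j / (M i k * M k j)| |1 - M i k * M k j / (M i j)| ≤ kocz M := by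
  apply le_csSup
  · refine BddAbove.mono ?_ ((Set.finite_range (fun t : Fin n × Fin n × Fin n =>
      min |1 - M t.1 t.2.1 / (M t.1 t.2.2 * M t.2.2 t.2.1)| |1 - M t.1 t.2.2 * M t.2.2 t.2.1 / (M t.1 t.2.1)|)).bddAbove)
    rintro x ⟨a, c, d, -, -, -, rfl⟩
    exact ⟨(a, c, d), rfl⟩
  · exact ⟨i, j, k, hij, hjk, hik, rfl⟩

theorem stmt18 (n r : ℕ) (hn : 3 ≤ n) (hr : 0 < r) (hrn : r ≤ n - 2) :
    0 < 1 - (1 + Real.sqrt (1 + 4 * ((n : ℝ) - 1) * ((n : ℝ) - r - 2))) / (2 * ((n : ℝ) - 1)) ∧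
    ∃ K₀ : ℝ, 0 < K₀ ∧
      ∀ M : Matrix (Fin n) (Fin n) ℝ,
        (∀ i j, 0 < M i j) → (∀ i j, M j i = 1 / M i j) → kocz M < K₀ →
        ∀ A : Matrix (Fin (n - r)) (Fin (n - r)) ℝ,
          (∀ i j : Fin (n - r), A i j =
            if i = j then 1
            else -(M (Fin.castLE (Nat.sub_le n r) i) (Fin.castLE (Nat.sub_le n r) j)) /
              ((n : ℝ) - 1)) →
          ∀ b : Fin (n - r) → ℝ, (∀ i, 0 < b i) →
            (∃! μ, A.mulVec μ = b) ∧ ∀ μ, A.mulVec μ = b → ∀ i, 0 < μ i := by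
  have hn3 : (3:ℝ) ≤ (n:ℝ) := by exact_mod_cast hn
  have hn1 : (0:ℝ) < (n:ℝ) - 1 := by linarith
  have hr1 : (1:ℝ) ≤ (r:ℝ) := by exact_mod_cast hr
  have hrn' : (r:ℝ) + 2 ≤ (n:ℝ) := by exact_mod_cast (by omega : r + 2 ≤ n)
  constructor
  · have hs : Real.sqrt (1 + 4 * ((n : ℝ) - 1) * ((n : ℝ) - r - 2)) < 2*(n:ℝ) - 3 := by
      rw [Real.sqrt_lt' (by nlinarith)]
      nlinarith
    have : (1 + Real.sqrt (1 + 4 * ((n : ℝ) - 1) * ((n : ℝ) - r - 2))) / (2 * ((n : ℝ) - 1)) < 1 := by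
      rw [div_lt_one (by linarith)]; linarith
    linarith
  · set K₀ : ℝ := 1 / (4 * (n:ℝ)) with hK₀def
    have hnpos : (0:ℝ) < (n:ℝ) := by linarith
    have hK0pos : 0 < K₀ := by positivity
    have hKle : K₀ ≤ 1/3 := by
      rw [hK₀def, div_le_div_iff₀ (by linarith) (by norm_num)]
      linarith
    refine ⟨K₀, hK0pos, ?_⟩
    intro M hMpos hMrec hkocz A hA b hb
    set ι : Fin (n - r) → Fin n := Fin.castLE (Nat.sub_le n r) with hι
    have hιinj : Function.Injective ι := Fin.castLE_injective _
    set k₀ : Fin n := ⟨n - 1, by omega⟩ with hk₀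
    have hιk : ∀ i : Fin (n - r), ι i ≠ k₀ := by
      intro i
      apply Fin.ne_of_val_ne
      have : (ι i : ℕ) < n - r := i.isLt
      simp only [hk₀]
      omega
    set w : Fin (n - r) → ℝ := fun i => M (ι i) k₀ with hwdef
    have hw : ∀ i, 0 < w i := fun i => hMpos _ _
    -- entrywise bounds on the conjugated matrix
    have hqb : ∀ i j : Fin (n - r), i ≠ j →
        1 - 2*K₀ < M (ι i) (ι j) * w j / w i ∧ M (ι i) (ι j) * w j / w i < 1 + 2*K₀ := by
      intro i j hij
      have hne1 : ι i ≠ ι j := fun h => hij (hιinj h)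
      have hmin := (kocz_ge18 M (ι i) (ι j) k₀ hne1 (hιk j) (hιk i)).trans_lt hkocz
      have hq1 : M (ι i) (ι j) / (M (ι i) k₀ * M k₀ (ι j)) = M (ι i) (ι j) * w j / w i := by
        rw [hMrec (ι j) k₀]
        rw [hwdef]
        field_simp
      have hq2 : M (ι i) k₀ * M k₀ (ι j) / (M (ι i) (ι j)) = 1 / (M (ι i) (ι j) * w j / w i) := by
        rw [← hq1, one_div_div]
      rw [hq1, hq2] at hmin
      have hqpos : 0 < M (ι i) (ι j) * w j / w i :=
        div_pos (mul_pos (hMpos _ _) (hw j)) (hw i)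
      exact qbound18 K₀ _ hqpos hKle hK0pos hmin
    set c : Matrix (Fin (n - r)) (Fin (n - r)) ℝ :=
      fun i j => M (ι i) (ι j) * w j / (w i * ((n:ℝ) - 1)) with hcdef
    have hc : ∀ i j, i ≠ j → 0 < c i j := by
      intro i j _
      exact div_pos (mul_pos (hMpos _ _) (hw j)) (mul_pos (hw i) hn1)
    have hrow : ∀ i, ∑ j ∈ Finset.univ.erase i, c i j < 1 := by
      intro i
      have hB : ∀ j ∈ Finset.univ.erase i, c i j ≤ (1 + 2*K₀) / ((n:ℝ) - 1) := by
        intro j hj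
        have h1 := (hqb i j (Finset.ne_of_mem_erase hj).symm).2
        have : c i j = (M (ι i) (ι j) * w j / w i) / ((n:ℝ) - 1) := by
          rw [hcdef]; rw [div_div]
        rw [this]
        gcongr
      calc ∑ j ∈ Finset.univ.erase i, c i j
          ≤ (Finset.univ.erase i).card • ((1 + 2*K₀) / ((n:ℝ) - 1)) :=
            Finset.sum_le_card_nsmul _ _ _ hB
        _ = ((Finset.univ.erase i).card : ℝ) * ((1 + 2*K₀) / ((n:ℝ) - 1)) := by
            rw [nsmul_eq_mul]
        _ < 1 := by
            have hcard : (Finset.univ.erase i).card = n - r - 1 := by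
              rw [Finset.card_erase_of_mem (Finset.mem_univ i), Finset.card_univ, Fintype.card_fin]
            rw [hcard]
            have hcc : ((n - r - 1 : ℕ) : ℝ) ≤ (n:ℝ) - 2 := by
              have h2 : (n - r - 1) + 2 ≤ n := by omega
              have := (Nat.cast_le (α := ℝ)).mpr h2
              push_cast at this
              linarith
            have hinv : (n:ℝ) * K₀ = 1/4 := by
              rw [hK₀def]; field_simp
            have hpos2 : (0:ℝ) < (1 + 2*K₀)/((n:ℝ)-1) := by positivity
            have step := mul_le_mul_of_nonneg_right hcc hpos2.le
            refine lt_of_le_of_lt step ?_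
            rw [mul_div_assoc', div_lt_one hn1]
            nlinarith [hinv, hK0pos]
    -- system translation
    have hsys : ∀ (d : Fin (n - r) → ℝ) (μ : Fin (n - r) → ℝ), A.mulVec μ = d → ∀ i,
        μ i / w i = d i / w i + ∑ j ∈ Finset.univ.erase i, c i j * (μ j / w j) := by
      intro d μ hAμ i
      have h0 := congrFun hAμ i
      rw [Matrix.mulVec, dotProduct,
        ← Finset.add_sum_erase _ _ (Finset.mem_univ i), hA i i, if_pos rfl, one_mul] at h0
      have e1 : (∑ j ∈ Finset.univ.erase i, c i j * (μ j / w j)) * w i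
          = ∑ j ∈ Finset.univ.erase i, -(A i j * μ j) := by
        rw [Finset.sum_mul]
        refine Finset.sum_congr rfl fun j hj => ?_
        rw [hA i j, if_neg (Finset.ne_of_mem_erase hj).symm, hcdef]
        have hwj := (hw j).ne'
        have hwi := (hw i).ne'
        field_simp
      rw [Finset.sum_neg_distrib] at e1
      have hμi : μ i = d i + (∑ j ∈ Finset.univ.erase i, c i j * (μ j / w j)) * w i := by
        rw [e1]; linarith
      rw [hμi, add_div, mul_div_cancel_right₀ _ (hw i).ne']
    have hker : ∀ μ, A.mulVec μ = 0 → μ = 0 := by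
      intro μ hμ
      funext i
      have heq : ∀ i, μ i / w i = ∑ j ∈ Finset.univ.erase i, c i j * (μ j / w j) := by
        intro i
        have := hsys 0 μ hμ i
        simpa using this
      have := aux_zero18 c (fun i => μ i / w i) hc hrow heq i
      have hwi := (hw i).ne'
      field_simp at this
      simpa using this
    have hpos : ∀ μ, A.mulVec μ = b → ∀ i, 0 < μ i := by
      intro μ hμ i
      have hν := aux_pos18 c (fun i => b i / w i) (fun i => μ i / w i) hc hrow
        (fun i => div_pos (hb i) (hw i)) (hsys b μ hμ) i
      have : μ i = μ i / w i * w i := (div_mul_cancel₀ _ (hw i).ne').symm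
      rw [this]
      exact mul_pos hν (hw i)
    have hinj : Function.Injective A.mulVecLin := by
      rw [← LinearMap.ker_eq_bot, LinearMap.ker_eq_bot']
      intro μ hμ
      exact hker μ hμ
    obtain ⟨μ, hμ⟩ := (LinearMap.injective_iff_surjective.mp hinj) b
    have hμ' : A.mulVec μ = b := by rwa [Matrix.mulVecLin_apply] at hμ
    refine ⟨⟨μ, hμ', fun y hy => ?_⟩, hpos⟩
    have := hker (y - μ) (by rw [Matrix.mulVec_sub, hy, hμ']; simp)
    have := sub_eq_zero.mp this
    exact this
end
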